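/- Let χ : ℝ³ → ℂ be twice continuously differentiable on ℝ³∖{0}, with |∂^α χ(k)| ≤ C for |α| = 1 and (|k|/⟨k⟩)|∂^α χ(k)| ≤ C⟨k⟩^{−1} for |α| = 2 (⟨k⟩ = (1+|k|²)^{1/2}). Fix k_s ∈ ℝ³ with k_s := |k_s| > 0 and let A₁ := {k : |k − k_s| < k_s/2}. Then ∫_{A₁} |k − k_s|^{−4} |χ(k) − χ(k_s) − (k − k_s)·∇χ(k)| d³k ≤ 18πC. -/

import Mathlib

open MeasureTheory Real

noncomputable section

def e3 (i : Fin 3) : EuclideanSpace ℝ (Fin 3) := EuclideanSpace.single i (1:ℝ)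

abbrev E3 := EuclideanSpace ℝ (Fin 3)

section aux
open Metric Set ENNReal

lemma lint_ball (r : ℝ) (hr : 0 < r) :
    ∫⁻ x in Metric.ball (0 : E3) r, ENNReal.ofReal (‖x‖ ^ (-(2:ℝ))) ∂volume
      = ENNReal.ofReal (4 * π * r) := by
  classical
  set F : ℝ → ℝ≥0∞ := fun t => (Set.Iio r).indicator (fun t => ENNReal.ofReal (t ^ (-(2:ℝ)))) t with hF
  have hmF : Measurable F := by
    apply Measurable.indicator _ measurableSet_Iio
    exact (measurable_id.pow_const _).ennreal_ofReal
  have step1 : ∫⁻ x in Metric.ball (0 : E3) r, ENNReal.ofReal (‖x‖ ^ (-(2:ℝ))) ∂volume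
      = ∫⁻ x, F ‖x‖ ∂(volume : Measure E3) := by
    rw [← lintegral_indicator measurableSet_ball]
    congr 1
    funext x
    simp [hF, Set.indicator_apply, mem_ball_zero_iff]
  have step2 : ∫⁻ x, F ‖x‖ ∂(volume : Measure E3)
      = ∫⁻ (x : ({0}ᶜ : Set E3)), F ‖(x : E3)‖ ∂(volume.comap Subtype.val) := by
    have h0 := MeasureTheory.setLIntegral_subtype (μ := (volume : Measure E3))
      (s := ({0}ᶜ : Set E3)) (measurableSet_singleton _).compl Set.univ (fun x => F ‖x‖)
    rw [Measure.restrict_univ, Set.image_univ, Subtype.range_coe,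
      MeasureTheory.restrict_compl_singleton] at h0
    exact h0.symm
  have step3 : ∫⁻ (x : ({0}ᶜ : Set E3)), F ‖(x : E3)‖ ∂(volume.comap Subtype.val)
      = ∫⁻ p : (Metric.sphere (0:E3) 1 × Set.Ioi (0:ℝ)),
          F p.2.1 ∂((volume : Measure E3).toSphere.prod
            (Measure.volumeIoiPow (Module.finrank ℝ E3 - 1))) := by
    rw [← (Measure.measurePreserving_homeomorphUnitSphereProd
        (volume : Measure E3)).lintegral_comp_emb
        (Homeomorph.measurableEmbedding _) (fun p => F p.2.1)]
    exact lintegral_congr fun x => by rw [homeomorphUnitSphereProd_apply_snd_coe]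
  have hinner : ∫⁻ t : Set.Ioi (0:ℝ), F t.1
        ∂(Measure.volumeIoiPow (Module.finrank ℝ E3 - 1)) = ENNReal.ofReal r := by
    have hdim : Module.finrank ℝ E3 - 1 = 2 := by
      simp [finrank_euclideanSpace]
    rw [hdim]
    rw [Measure.volumeIoiPow]
    rw [lintegral_withDensity_eq_lintegral_mul _
      (f := fun t : Set.Ioi (0:ℝ) => ENNReal.ofReal (t.1 ^ 2))
      ((measurable_subtype_coe.pow_const 2).ennreal_ofReal)
      (g := fun t : Set.Ioi (0:ℝ) => F t.1)
      (hmF.comp measurable_subtype_coe)]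
    have h0 := MeasureTheory.setLIntegral_subtype (μ := (volume : Measure ℝ))
      (s := Set.Ioi (0:ℝ)) measurableSet_Ioi Set.univ
      (fun t : ℝ => ENNReal.ofReal (t ^ 2) * F t)
    rw [Measure.restrict_univ, Set.image_univ, Subtype.range_coe] at h0
    have heq : ∫⁻ (x : Set.Ioi (0:ℝ)),
        ((fun t : Set.Ioi (0:ℝ) => ENNReal.ofReal (t.1 ^ 2)) * fun t : Set.Ioi (0:ℝ) => F t.1) x
          ∂(Measure.comap Subtype.val volume)
        = ∫⁻ (x : Set.Ioi (0:ℝ)), ENNReal.ofReal (x.1 ^ 2) * F x.1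
          ∂(Measure.comap Subtype.val volume) := rfl
    rw [heq, h0]
    have hcong : ∫⁻ t in Set.Ioi (0:ℝ), ENNReal.ofReal (t ^ 2) * F t ∂volume
        = ∫⁻ t in Set.Ioi (0:ℝ), (Set.Iio r).indicator (fun _ => 1) t ∂volume := by
      apply setLIntegral_congr_fun measurableSet_Ioi
      intro t ht
      by_cases h : t < r
      · rw [hF]
        simp only [Set.indicator_of_mem (Set.mem_Iio.mpr h)]
        rw [← ENNReal.ofReal_mul (by positivity)]
        rw [Real.rpow_neg ht.le]
        rw [show ((2:ℝ)) = ((2:ℕ):ℝ) by norm_num, Real.rpow_natCast]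
        rw [mul_inv_cancel₀ (pow_ne_zero _ (ne_of_gt ht))]
        simp
      · rw [hF]
        simp only [Set.indicator_of_notMem (by simpa using h : t ∉ Set.Iio r)]
        simp
    rw [hcong, lintegral_indicator measurableSet_Iio]
    rw [setLIntegral_one, Measure.restrict_apply measurableSet_Iio]
    rw [Set.Iio_inter_Ioi, Real.volume_Ioo]
    norm_num
  have hprod : ∫⁻ p : (Metric.sphere (0:E3) 1 × Set.Ioi (0:ℝ)),
          F p.2.1 ∂((volume : Measure E3).toSphere.prod
            (Measure.volumeIoiPow (Module.finrank ℝ E3 - 1)))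
      = (volume : Measure E3).toSphere Set.univ * ENNReal.ofReal r := by
    rw [MeasureTheory.lintegral_prod
      (fun p : (Metric.sphere (0:E3) 1 × Set.Ioi (0:ℝ)) => F p.2.1)
      (by exact (hmF.comp (measurable_subtype_coe.comp measurable_snd)).aemeasurable)]
    simp only [hinner]
    rw [lintegral_const]
    ring
  have hsph : (volume : Measure E3).toSphere Set.univ = ENNReal.ofReal (4 * π) := by
    rw [Measure.toSphere_apply_univ]
    rw [EuclideanSpace.volume_ball]
    have hcard : (Fintype.card (Fin 3)) = 3 := by simp
    rw [hcard]
    have hΓ : Real.Gamma ((3:ℕ) / 2 + 1) = 3 / 4 * Real.sqrt π := by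
      have h32 : ((3:ℕ):ℝ) / 2 + 1 = 3/2 + 1 := by norm_num
      rw [h32, Real.Gamma_add_one (by norm_num)]
      have h12 : (3:ℝ)/2 = 1/2 + 1 := by norm_num
      rw [h12, Real.Gamma_add_one (by norm_num), Real.Gamma_one_half_eq]
      ring
    have hsqrt3 : Real.sqrt π ^ 3 = π * Real.sqrt π := by
      rw [pow_succ, sq_sqrt Real.pi_pos.le]
    have hdim : Module.finrank ℝ E3 = 3 := by simp [finrank_euclideanSpace]
    rw [hdim, hΓ, hsqrt3]
    have hs : Real.sqrt π ≠ 0 := ne_of_gt (Real.sqrt_pos.mpr Real.pi_pos)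
    have : π * Real.sqrt π / (3 / 4 * Real.sqrt π) = 4 * π / 3 := by
      field_simp
    rw [this]
    rw [ENNReal.ofReal_one, one_pow, one_mul]
    rw [show ((3:ℕ) : ℝ≥0∞) = ENNReal.ofReal 3 by simp]
    rw [← ENNReal.ofReal_mul (by norm_num)]
    congr 1
    ring
  rw [step1, step2, step3, hprod, hsph, ← ENNReal.ofReal_mul (by positivity)]

lemma sum_abs_le (v : E3) : ∑ i, |v i| ≤ Real.sqrt 3 * ‖v‖ := by
  have h1 : (∑ i, |v i|) ^ 2 ≤ 3 * ∑ i, |v i| ^ 2 := by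
    simpa using sq_sum_le_card_mul_sum_sq (s := (Finset.univ : Finset (Fin 3)))
      (f := fun i => |v i|)
  have hn : ‖v‖ = Real.sqrt (∑ i, |v i| ^ 2) := by
    simp [EuclideanSpace.norm_eq, Real.norm_eq_abs]
  calc ∑ i, |v i| = Real.sqrt ((∑ i, |v i|) ^ 2) := by
        rw [Real.sqrt_sq (Finset.sum_nonneg fun i _ => abs_nonneg _)]
    _ ≤ Real.sqrt (3 * ∑ i, |v i| ^ 2) := Real.sqrt_le_sqrt h1
    _ = Real.sqrt 3 * ‖v‖ := by
        rw [Real.sqrt_mul (by norm_num), hn]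

lemma decomp (v : E3) : v = ∑ i, v i • e3 i := by
  have := (EuclideanSpace.basisFun (Fin 3) ℝ).sum_repr v
  simp only [EuclideanSpace.basisFun_repr, EuclideanSpace.basisFun_apply] at this
  exact this.symm

lemma bilinear_bound (B : E3 →L[ℝ] E3 →L[ℝ] ℂ) (c : ℝ) (hc : 0 ≤ c)
    (h : ∀ i j, ‖B (e3 i) (e3 j)‖ ≤ c) : ‖B‖ ≤ 3 * c := by
  refine ContinuousLinearMap.opNorm_le_bound _ (by positivity) fun v => ?_
  refine ContinuousLinearMap.opNorm_le_bound _ (by positivity) fun w => ?_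
  have expand : B v w = ∑ i, ∑ j, (v i * w j) • B (e3 i) (e3 j) := by
    conv_lhs => rw [decomp v]
    rw [map_sum, ContinuousLinearMap.sum_apply]
    refine Finset.sum_congr rfl fun i _ => ?_
    rw [ContinuousLinearMap.map_smul, ContinuousLinearMap.smul_apply]
    conv_lhs => rw [decomp w]
    rw [map_sum, Finset.smul_sum]
    refine Finset.sum_congr rfl fun j _ => ?_
    rw [ContinuousLinearMap.map_smul, smul_smul]
  have hbound : ‖B v w‖ ≤ (∑ i, |v i|) * (∑ j, |w j|) * c := by
    rw [expand]
    calc ‖∑ i, ∑ j, (v i * w j) • B (e3 i) (e3 j)‖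
        ≤ ∑ i, ‖∑ j, (v i * w j) • B (e3 i) (e3 j)‖ := norm_sum_le _ _
      _ ≤ ∑ i, ∑ j, |v i| * |w j| * c := by
          refine Finset.sum_le_sum fun i _ => ?_
          refine (norm_sum_le _ _).trans (Finset.sum_le_sum fun j _ => ?_)
          rw [norm_smul, Real.norm_eq_abs, abs_mul]
          exact mul_le_mul_of_nonneg_left (h i j) (by positivity)
      _ = (∑ i, |v i|) * (∑ j, |w j|) * c := by
          rw [Finset.sum_mul_sum, Finset.sum_mul]
          exact Finset.sum_congr rfl fun i _ => by
            rw [Finset.sum_mul]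
  have hv := sum_abs_le v
  have hw := sum_abs_le w
  have hvn : (0:ℝ) ≤ ∑ i, |v i| := Finset.sum_nonneg fun i _ => abs_nonneg _
  have hwn : (0:ℝ) ≤ ∑ j, |w j| := Finset.sum_nonneg fun i _ => abs_nonneg _
  have hsq : Real.sqrt 3 * Real.sqrt 3 = 3 := Real.mul_self_sqrt (by norm_num)
  have hA : (∑ i, |v i|) * (∑ j, |w j|) ≤ (Real.sqrt 3 * ‖v‖) * (Real.sqrt 3 * ‖w‖) :=
    mul_le_mul hv hw hwn (by positivity)
  calc ‖B v w‖ ≤ (∑ i, |v i|) * (∑ j, |w j|) * c := hbound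
    _ ≤ (Real.sqrt 3 * ‖v‖) * (Real.sqrt 3 * ‖w‖) * c :=
        mul_le_mul_of_nonneg_right hA hc
    _ = (Real.sqrt 3 * Real.sqrt 3) * ‖v‖ * ‖w‖ * c := by ring
    _ = 3 * c * ‖v‖ * ‖w‖ := by rw [hsq]; ring

lemma pointwise_bound (C : ℝ) (hC : 0 < C) (χ : E3 → ℂ)
    (hχ : ContDiffOn ℝ 2 χ {(0 : E3)}ᶜ)
    (h2 : ∀ k : E3, k ≠ 0 → ∀ i j : Fin 3,
      (‖k‖ / Real.sqrt (1 + ‖k‖ ^ 2)) *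
        ‖fderiv ℝ (fun y => fderiv ℝ χ y (e3 i)) k (e3 j)‖
        ≤ C * (1 + ‖k‖ ^ 2) ^ (-(1:ℝ)/2))
    (ks : E3) (hks : ks ≠ 0) (k : E3) (hk : k ∈ Metric.ball ks (‖ks‖ / 2)) :
    ‖k - ks‖ ^ (-(4:ℝ)) * ‖χ k - χ ks - fderiv ℝ χ k (k - ks)‖
      ≤ (6 * C / ‖ks‖) * ‖k - ks‖ ^ (-(2:ℝ)) := by
  have hksn : 0 < ‖ks‖ := norm_pos_iff.mpr hks
  set M : ℝ := 6 * C / ‖ks‖ with hM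
  have hM0 : 0 ≤ M := by positivity
  -- every point of the ball is far from 0
  have hballnorm : ∀ z ∈ Metric.ball ks (‖ks‖ / 2), ‖ks‖ / 2 < ‖z‖ := by
    intro z hz
    rw [Metric.mem_ball, dist_eq_norm] at hz
    have h1 : |‖ks‖ - ‖z‖| ≤ ‖ks - z‖ := abs_norm_sub_norm_le ks z
    have h2' : ‖ks - z‖ = ‖z - ks‖ := norm_sub_rev _ _
    rw [h2'] at h1
    have := abs_le.mp h1
    linarith [this.1]
  have hball0 : ∀ z ∈ Metric.ball ks (‖ks‖ / 2), z ≠ 0 := by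
    intro z hz h0
    have := hballnorm z hz
    rw [h0, norm_zero] at this
    linarith
  have hopen : IsOpen ({(0:E3)}ᶜ) := isOpen_compl_singleton
  have hcd : ∀ z ∈ Metric.ball ks (‖ks‖ / 2), ContDiffAt ℝ 2 χ z := fun z hz =>
    hχ.contDiffAt (hopen.mem_nhds (hball0 z hz))
  have hdiff1 : ∀ z ∈ Metric.ball ks (‖ks‖ / 2), DifferentiableAt ℝ χ z := fun z hz =>
    (hcd z hz).differentiableAt (by norm_num)
  have hdiff2 : ∀ z ∈ Metric.ball ks (‖ks‖ / 2), DifferentiableAt ℝ (fderiv ℝ χ) z := by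
    intro z hz
    have : ContDiffAt ℝ 1 (fderiv ℝ χ) z := (hcd z hz).fderiv_right (by norm_num)
    exact this.differentiableAt (by norm_num)
  -- operator norm bound on second derivative
  have hop : ∀ z ∈ Metric.ball ks (‖ks‖ / 2), ‖fderiv ℝ (fderiv ℝ χ) z‖ ≤ M := by
    intro z hz
    have hz0 := hball0 z hz
    have hzn := hballnorm z hz
    have hzpos : 0 < ‖z‖ := by linarith
    have hentry : ∀ i j : Fin 3, ‖fderiv ℝ (fderiv ℝ χ) z (e3 i) (e3 j)‖ ≤ 2 * C / ‖ks‖ := by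
      intro i j
      have hds := h2 z hz0 j i
      -- rewrite the entry
      have hkey : fderiv ℝ (fun y => fderiv ℝ χ y (e3 j)) z
          = (fderiv ℝ (fderiv ℝ χ) z).flip (e3 j) := by
        have := fderiv_clm_apply (𝕜 := ℝ) (c := fderiv ℝ χ) (u := fun _ => e3 j)
          (hdiff2 z hz) (differentiableAt_const _)
        rw [this]
        simp
      have hflip : fderiv ℝ (fun y => fderiv ℝ χ y (e3 j)) z (e3 i)
          = fderiv ℝ (fderiv ℝ χ) z (e3 i) (e3 j) := by
        rw [hkey]; rfl
      rw [hflip] at hds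
      set s : ℝ := Real.sqrt (1 + ‖z‖ ^ 2) with hs
      have hspos : 0 < s := Real.sqrt_pos.mpr (by positivity)
      have hrpow : (1 + ‖z‖ ^ 2) ^ (-(1:ℝ)/2) = s⁻¹ := by
        rw [show (-(1:ℝ)/2) = -(1/2) by norm_num, Real.rpow_neg (by positivity),
          ← Real.sqrt_eq_rpow]
      rw [hrpow] at hds
      set d : ℝ := ‖fderiv ℝ (fderiv ℝ χ) z (e3 i) (e3 j)‖ with hd
      have hd0 : 0 ≤ d := norm_nonneg _
      -- from (‖z‖/s) * d ≤ C * s⁻¹ deduce ‖z‖ * d ≤ C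
      have hzd : ‖z‖ * d ≤ C := by
        have := mul_le_mul_of_nonneg_right hds hspos.le
        have hss : s⁻¹ * s = 1 := inv_mul_cancel₀ (ne_of_gt hspos)
        calc ‖z‖ * d = (‖z‖ / s * d) * s := by field_simp
          _ ≤ (C * s⁻¹) * s := this
          _ = C := by rw [mul_assoc, hss, mul_one]
      -- d ≤ C / ‖z‖ ≤ 2C/‖ks‖
      have h1 : d ≤ C / ‖z‖ := by
        rw [le_div_iff₀ hzpos]; linarith [hzd]
      have h2' : C / ‖z‖ ≤ 2 * C / ‖ks‖ := by
        rw [div_le_div_iff₀ hzpos hksn]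
        nlinarith [hzn, hC.le, hksn]
      linarith
    have := bilinear_bound (fderiv ℝ (fderiv ℝ χ) z) (2 * C / ‖ks‖) (by positivity) hentry
    calc ‖fderiv ℝ (fderiv ℝ χ) z‖ ≤ 3 * (2 * C / ‖ks‖) := this
      _ = M := by rw [hM]; ring
  -- mean value: Lipschitz bound for fderiv χ on the ball
  have hlip : ∀ z ∈ Metric.ball ks (‖ks‖ / 2),
      ‖fderiv ℝ χ z - fderiv ℝ χ k‖ ≤ M * ‖z - k‖ := fun z hz =>
    (convex_ball ks (‖ks‖ / 2)).norm_image_sub_le_of_norm_fderiv_le hdiff2 hop hk hz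
  -- segment
  have hseg : segment ℝ ks k ⊆ Metric.ball ks (‖ks‖ / 2) :=
    (convex_ball ks (‖ks‖ / 2)).segment_subset (Metric.mem_ball_self (by positivity)) hk
  have hsegdist : ∀ z ∈ segment ℝ ks k, ‖z - k‖ ≤ ‖ks - k‖ := by
    rintro z ⟨a, b, ha, hb, hab, rfl⟩
    have : a • ks + b • k - k = a • (ks - k) := by
      have hb' : b = 1 - a := by linarith
      rw [hb']
      module
    rw [this, norm_smul, Real.norm_eq_abs, abs_of_nonneg ha]
    exact mul_le_of_le_one_left (norm_nonneg _) (by linarith)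
  have hbound' : ∀ z ∈ segment ℝ ks k,
      ‖fderiv ℝ χ z - fderiv ℝ χ k‖ ≤ M * ‖ks - k‖ := by
    intro z hz
    exact (hlip z (hseg hz)).trans (mul_le_mul_of_nonneg_left (hsegdist z hz) hM0)
  have htaylor : ‖χ k - χ ks - fderiv ℝ χ k (k - ks)‖ ≤ (M * ‖ks - k‖) * ‖k - ks‖ :=
    (convex_segment ks k).norm_image_sub_le_of_norm_fderiv_le'
      (fun z hz => hdiff1 z (hseg hz)) hbound'
      (left_mem_segment ℝ ks k) (right_mem_segment ℝ ks k)
  -- final arithmetic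
  set t : ℝ := ‖k - ks‖ with ht
  have ht0 : 0 ≤ t := norm_nonneg _
  rcases eq_or_lt_of_le ht0 with h0 | htpos
  · -- t = 0
    rw [← h0, Real.zero_rpow (by norm_num), Real.zero_rpow (by norm_num)]
    simp
  · have hrev : ‖ks - k‖ = t := by rw [ht, norm_sub_rev]
    rw [hrev] at htaylor
    have hX : ‖χ k - χ ks - fderiv ℝ χ k (k - ks)‖ ≤ M * t ^ 2 := by
      calc ‖χ k - χ ks - fderiv ℝ χ k (k - ks)‖ ≤ (M * t) * t := htaylor
        _ = M * t ^ 2 := by ring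
    have h2t : t ^ (-(2:ℝ)) = (t ^ 2)⁻¹ := by
      rw [Real.rpow_neg ht0, show ((2:ℝ)) = ((2:ℕ):ℝ) by norm_num, Real.rpow_natCast]
    have h4t : t ^ (-(4:ℝ)) = (t ^ 4)⁻¹ := by
      rw [Real.rpow_neg ht0, show ((4:ℝ)) = ((4:ℕ):ℝ) by norm_num, Real.rpow_natCast]
    rw [h2t, h4t]
    calc (t ^ 4)⁻¹ * ‖χ k - χ ks - fderiv ℝ χ k (k - ks)‖
        ≤ (t ^ 4)⁻¹ * (M * t ^ 2) := by
          exact mul_le_mul_of_nonneg_left hX (by positivity)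
      _ = M * (t ^ 2)⁻¹ := by
          field_simp

end aux

theorem stmt_18 (C : ℝ) (hC : 0 < C) (χ : EuclideanSpace ℝ (Fin 3) → ℂ)
    (hχ : ContDiffOn ℝ 2 χ {(0 : EuclideanSpace ℝ (Fin 3))}ᶜ)
    (h1 : ∀ k : EuclideanSpace ℝ (Fin 3), k ≠ 0 → ∀ i : Fin 3,
      ‖fderiv ℝ χ k (e3 i)‖ ≤ C)
    (h2 : ∀ k : EuclideanSpace ℝ (Fin 3), k ≠ 0 → ∀ i j : Fin 3,
      (‖k‖ / Real.sqrt (1 + ‖k‖ ^ 2)) *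
        ‖fderiv ℝ (fun y => fderiv ℝ χ y (e3 i)) k (e3 j)‖
        ≤ C * (1 + ‖k‖ ^ 2) ^ (-(1:ℝ)/2))
    (ks : EuclideanSpace ℝ (Fin 3)) (hks : ks ≠ 0) :
    (∫ k in Metric.ball ks (‖ks‖ / 2),
        ‖k - ks‖ ^ (-(4:ℝ)) * ‖χ k - χ ks - fderiv ℝ χ k (k - ks)‖)
      ≤ 18 * π * C := by
  have hksn : 0 < ‖ks‖ := norm_pos_iff.mpr hks
  set r : ℝ := ‖ks‖ / 2 with hr
  have hrpos : 0 < r := by positivity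
  set M : ℝ := 6 * C / ‖ks‖ with hM
  have hM0 : 0 ≤ M := by positivity
  set g : E3 → ℝ := fun x => M * ‖x - ks‖ ^ (-(2:ℝ)) with hg
  have hgmeas : Measurable g := by
    apply Measurable.const_mul
    exact ((continuous_id.sub continuous_const).norm.measurable).pow_const _
  have hgnn : ∀ x, 0 ≤ g x := fun x => by
    apply mul_nonneg hM0 (Real.rpow_nonneg (norm_nonneg _) _)
  -- lintegral of g over the ball
  have hlint : ∫⁻ x in Metric.ball ks r, ENNReal.ofReal (g x) ∂volume
      = ENNReal.ofReal (M * (4 * π * r)) := by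
    have hsplit : ∀ x : E3, ENNReal.ofReal (g x)
        = ENNReal.ofReal M * ENNReal.ofReal (‖x - ks‖ ^ (-(2:ℝ))) := fun x => by
      rw [← ENNReal.ofReal_mul hM0]
    calc ∫⁻ x in Metric.ball ks r, ENNReal.ofReal (g x) ∂volume
        = ∫⁻ x in Metric.ball ks r,
            ENNReal.ofReal M * ENNReal.ofReal (‖x - ks‖ ^ (-(2:ℝ))) ∂volume := by
          exact lintegral_congr fun x => hsplit x
      _ = ENNReal.ofReal M *
            ∫⁻ x in Metric.ball ks r, ENNReal.ofReal (‖x - ks‖ ^ (-(2:ℝ))) ∂volume := by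
          rw [lintegral_const_mul]
          exact (((continuous_id.sub continuous_const).norm.measurable).pow_const _).ennreal_ofReal
      _ = ENNReal.ofReal M * ENNReal.ofReal (4 * π * r) := by
          congr 1
          have hmap := (measurePreserving_add_right (volume : Measure E3) ks).map_eq
          have hmeas : Measurable fun x : E3 => ENNReal.ofReal (‖x - ks‖ ^ (-(2:ℝ))) :=
            (((continuous_id.sub continuous_const).norm.measurable).pow_const _).ennreal_ofReal
          rw [← hmap, MeasureTheory.setLIntegral_map measurableSet_ball hmeas
            (measurable_add_const ks)]
          have hpre : (fun x : E3 => x + ks) ⁻¹' Metric.ball ks r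
              = Metric.ball (0 : E3) r := by
            ext y
            simp [Metric.mem_ball, dist_eq_norm]
          rw [hpre]
          have : ∀ y : E3, ENNReal.ofReal (‖y + ks - ks‖ ^ (-(2:ℝ)))
              = ENNReal.ofReal (‖y‖ ^ (-(2:ℝ))) := fun y => by
            rw [add_sub_cancel_right]
          rw [lintegral_congr this]
          exact lint_ball r hrpos
      _ = ENNReal.ofReal (M * (4 * π * r)) := by
          rw [← ENNReal.ofReal_mul hM0]
  -- g is integrable on the ball
  have hgint : IntegrableOn g (Metric.ball ks r) volume := by
    constructor
    · exact hgmeas.aestronglyMeasurable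
    · rw [hasFiniteIntegral_iff_ofReal (Filter.Eventually.of_forall hgnn)]
      rw [hlint]
      exact ENNReal.ofReal_lt_top
  -- integral of g
  have hgval : ∫ x in Metric.ball ks r, g x ∂volume = M * (4 * π * r) := by
    rw [integral_eq_lintegral_of_nonneg_ae (Filter.Eventually.of_forall hgnn)
      hgmeas.aestronglyMeasurable, hlint, ENNReal.toReal_ofReal (by positivity)]
  have hmono : (∫ k in Metric.ball ks r,
        ‖k - ks‖ ^ (-(4:ℝ)) * ‖χ k - χ ks - fderiv ℝ χ k (k - ks)‖)
      ≤ ∫ x in Metric.ball ks r, g x ∂volume := by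
    apply integral_mono_of_nonneg
    · exact Filter.Eventually.of_forall fun x =>
        mul_nonneg (Real.rpow_nonneg (norm_nonneg _) _) (norm_nonneg _)
    · exact hgint
    · refine (ae_restrict_iff' measurableSet_ball).mpr (Filter.Eventually.of_forall ?_)
      intro x hx
      exact pointwise_bound C hC χ hχ h2 ks hks x hx
  refine hmono.trans ?_
  rw [hgval]
  have : M * (4 * π * r) = 12 * π * C := by
    rw [hM, hr]
    field_simp
    ring
  rw [this]
  nlinarith [Real.pi_pos, hC]

end
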